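/- For every dimension d ≥ 1, every integer l ≥ 0 and every ρ ∈ (0,1] there exists a constant C > 0 with the following property: for every ρ-shape-regular simplex τ ⊆ ℝ^d with diameter h_τ, and every real polynomial q in d variables of total degree at most l whose associated polynomial function vanishes at one of the d+1 vertices of τ, one has ∫_τ q(x)² dx ≤ C² · h_τ² · ∫_τ ‖∇q(x)‖² dx, where ∇q denotes the gradient of the polynomial function x ↦ q(x) and ‖·‖ is the Euclidean norm on ℝ^d; equivalently ‖q‖_{L²(τ)} ≤ C h_τ ‖∇q‖_{L²(τ)}. -/

import Mathlib

/-!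
A simplex of diameter `h` containing `closedBall z (ρ * h)` also lies in `closedBall z h`.
Rescaling `x = z + h • u` turns a set squeezed between `closedBall z (ρ * h)` and
`closedBall z h` into one squeezed between `closedBall 0 ρ` and `closedBall 0 1`, and keeps the
total degree of a polynomial. On the finite-dimensional space of polynomials of degree `≤ l`, the
`L²(closedBall 0 ρ)` norm is a genuine norm (a polynomial vanishing on an open set is zero), so by
Banach–Steinhaus it bounds point values uniformly on `closedBall 0 1`. Applied to the partial
derivatives this bounds `∇P` on the unit ball by `‖∇P‖_{L²(closedBall 0 ρ)}`, and the mean value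
theorem, started at the vertex where `P` vanishes, bounds `P` itself. Undoing the rescaling
produces the factor `h²`.
-/

open MeasureTheory Metric MvPolynomial InnerProductSpace Module Pointwise

theorem exists_norm_le_mul_norm_of_injective {𝕜 V F G ι : Type*} [NontriviallyNormedField 𝕜]
    [CompleteSpace 𝕜] [AddCommGroup V] [Module 𝕜 V] [FiniteDimensional 𝕜 V]
    [NormedAddCommGroup F] [NormedSpace 𝕜 F] [NormedAddCommGroup G] [NormedSpace 𝕜 G]
    {S : V →ₗ[𝕜] F} (hS : Function.Injective S) (φ : ι → V →ₗ[𝕜] G)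
    (hφ : ∀ v, ∃ C, ∀ i, ‖φ i v‖ ≤ C) : ∃ C, ∀ i v, ‖φ i v‖ ≤ C * ‖S v‖ := by
  let e := LinearEquiv.ofInjective S hS
  have := FiniteDimensional.complete 𝕜 (LinearMap.range S)
  let ψ : ι → LinearMap.range S →L[𝕜] G := fun i =>
    LinearMap.toContinuousLinearMap (φ i ∘ₗ e.symm.toLinearMap)
  obtain ⟨C, hC⟩ := banach_steinhaus (g := ψ) fun w => hφ (e.symm w)
  refine ⟨C, fun i v => ?_⟩
  calc ‖φ i v‖ = ‖ψ i (e v)‖ := by simp [ψ]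
    _ ≤ ‖ψ i‖ * ‖e v‖ := (ψ i).le_opNorm _
    _ ≤ C * ‖S v‖ := mul_le_mul_of_nonneg_right (hC i) (norm_nonneg _)

section AffineRescaling

variable {E F : Type*} [NormedAddCommGroup E] [NormedSpace ℝ E] [MeasurableSpace E]
  [BorelSpace E] [FiniteDimensional ℝ E] (μ : Measure E) [μ.IsAddHaarMeasure]
  [NormedAddCommGroup F] [NormedSpace ℝ F]

theorem setIntegral_comp_add_smul_of_pos (f : E → F) (z : E) {h : ℝ} (hh : 0 < h) (s : Set E) :
    ∫ u in s, f (z + h • u) ∂μ = (h ^ finrank ℝ E)⁻¹ • ∫ x in z +ᵥ h • s, f x ∂μ := by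
  rw [Measure.setIntegral_comp_smul_of_pos μ (fun x => f (z + x)) s hh,
    ← (measurePreserving_add_left μ z).setIntegral_image_emb (measurableEmbedding_addLeft z)]
  rfl

theorem setIntegral_closedBall_comp_add_smul (f : E → F) (z : E) {h : ℝ} (hh : 0 < h) (r : ℝ) :
    ∫ u in closedBall 0 r, f (z + h • u) ∂μ =
      (h ^ finrank ℝ E)⁻¹ • ∫ x in closedBall z (h * r), f x ∂μ := by
  rw [setIntegral_comp_add_smul_of_pos μ f z hh, smul_closedBall' hh.ne', smul_zero,
    vadd_closedBall_zero, Real.norm_of_nonneg hh.le]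

end AffineRescaling

theorem HasGradientAt.comp_add_smul {E : Type*} [NormedAddCommGroup E] [InnerProductSpace ℝ E]
    [CompleteSpace E] {f : E → ℝ} {g z u : E} (h : ℝ) (hf : HasGradientAt f g (z + h • u)) :
    HasGradientAt (fun u => f (z + h • u)) (h • g) u := by
  rw [hasGradientAt_iff_hasFDerivAt] at hf ⊢
  refine (hf.comp u (((hasFDerivAt_id u).const_smul h).const_add z)).congr_fderiv ?_
  ext v
  simp

namespace MvPolynomial

section Degree

variable {R σ : Type*} [CommSemiring R]

theorem totalDegree_pderiv_le (q : MvPolynomial σ R) (i : σ) :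
    (pderiv i q).totalDegree ≤ q.totalDegree := by
  classical
  conv_lhs => rw [q.as_sum, map_sum]
  refine (totalDegree_finsetSum _ _).trans (Finset.sup_le fun m hm => ?_)
  rw [pderiv_monomial]
  refine (totalDegree_monomial_le _ _).trans (le_trans ?_ (le_totalDegree hm))
  exact Finsupp.sum_le_sum_index tsub_le_self (fun _ _ => monotone_id) (fun _ _ => rfl)

theorem totalDegree_bind₁_le {τ : Type*} {s : σ → MvPolynomial τ R} {k : ℕ}
    (hs : ∀ i, (s i).totalDegree ≤ k) (q : MvPolynomial σ R) :
    (bind₁ s q).totalDegree ≤ q.totalDegree * k := by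
  conv_lhs => rw [q.as_sum, map_sum]
  refine (totalDegree_finsetSum _ _).trans (Finset.sup_le fun m hm => ?_)
  rw [bind₁_monomial]
  refine (totalDegree_mul _ _).trans ?_
  rw [totalDegree_C, zero_add]
  refine (totalDegree_finsetProd _ _).trans ?_
  refine le_trans ?_ (Nat.mul_le_mul_right k (le_totalDegree hm))
  rw [Finsupp.sum, Finset.sum_mul]
  exact Finset.sum_le_sum fun j _ => (totalDegree_pow _ _).trans (Nat.mul_le_mul_left _ (hs j))

end Degree

variable {ι : Type*}

local notation "𝔼" => EuclideanSpace ℝ ι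

theorem exists_eval_eq_eval_add_smul (q : MvPolynomial ι ℝ) (z : 𝔼) (h : ℝ) :
    ∃ P : MvPolynomial ι ℝ, P.totalDegree ≤ q.totalDegree ∧
      ∀ u : 𝔼, eval u P = eval (z + h • u) q := by
  refine ⟨bind₁ (fun j => C (z j) + C h * X j) q, ?_, fun u => ?_⟩
  · refine (totalDegree_bind₁_le (fun j => ?_) q).trans_eq (mul_one _)
    exact (totalDegree_add _ _).trans (max_le (by simp) ((totalDegree_mul _ _).trans (by simp)))
  · change eval₂Hom (RingHom.id ℝ) _ (bind₁ _ q) = eval₂Hom (RingHom.id ℝ) _ q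
    rw [eval₂Hom_bind₁]
    congr
    funext j
    simp [mul_comm]

theorem continuous_eval_euclidean (q : MvPolynomial ι ℝ) : Continuous fun y : 𝔼 => eval y q :=
  (continuous_eval q).comp (PiLp.continuous_ofLp 2 _)

variable [Fintype ι]

theorem hasFDerivAt_eval_euclidean (q : MvPolynomial ι ℝ) (x : 𝔼) :
    HasFDerivAt (fun y : 𝔼 => eval y q)
      (∑ j, eval x (pderiv j q) • EuclideanSpace.proj (𝕜 := ℝ) j) x := by
  classical
  induction q using MvPolynomial.induction_on with
  | C a =>
    simp only [eval_C, pderiv_C, map_zero, zero_smul, Finset.sum_const_zero]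
    exact hasFDerivAt_const a x
  | add p r hp hr =>
    simp only [map_add, add_smul, Finset.sum_add_distrib]
    exact hp.fun_add hr
  | mul_X p i hp =>
    have hderiv : ∑ j, eval x (pderiv j (p * X i)) • EuclideanSpace.proj (𝕜 := ℝ) j =
        eval x p • EuclideanSpace.proj i +
          x i • ∑ j, eval x (pderiv j p) • EuclideanSpace.proj j := by
      ext v
      simp [pderiv_X, Pi.single_apply, apply_ite, mul_add, Finset.sum_add_distrib,
        Finset.mul_sum, mul_left_comm, mul_comm]
    simp only [eval_mul, eval_X, hderiv]
    exact hp.fun_mul (EuclideanSpace.proj i : 𝔼 →L[ℝ] ℝ).hasFDerivAt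

theorem hasGradientAt_eval_euclidean (q : MvPolynomial ι ℝ) (x : 𝔼) :
    HasGradientAt (fun y : 𝔼 => eval y q) (WithLp.toLp 2 fun j => eval x (pderiv j q)) x := by
  rw [hasGradientAt_iff_hasFDerivAt]
  refine (hasFDerivAt_eval_euclidean q x).congr_fderiv ?_
  ext v
  simp [EuclideanSpace.inner_eq_star_dotProduct, dotProduct, mul_comm]

theorem norm_gradient_eval_sq (q : MvPolynomial ι ℝ) (x : 𝔼) :
    ‖gradient (fun y : 𝔼 => eval y q) x‖ ^ 2 = ∑ j, eval x (pderiv j q) ^ 2 := by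
  rw [(hasGradientAt_eval_euclidean q x).gradient, EuclideanSpace.norm_sq_eq]
  simp

theorem continuous_gradient_eval (q : MvPolynomial ι ℝ) :
    Continuous (gradient fun y : 𝔼 => eval y q) := by
  rw [gradient_eq fun x => hasGradientAt_eval_euclidean q x]
  exact (PiLp.continuous_toLp 2 _).comp
    (continuous_pi fun j => continuous_eval_euclidean (pderiv j q))

theorem eq_zero_of_eval_eq_zero_on_isOpen {q : MvPolynomial ι ℝ} {U : Set 𝔼} (hU : IsOpen U)
    (hne : U.Nonempty) (h : ∀ x ∈ U, eval x q = 0) : q = 0 := by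
  obtain ⟨x₀, hx₀⟩ := hne
  have hzero := (AnalyticOnNhd.eval_continuousLinearMap
      (PiLp.continuousLinearEquiv 2 ℝ (fun _ : ι => ℝ) : 𝔼 →L[ℝ] ι → ℝ) q
    ).eqOn_zero_of_preconnected_of_eventuallyEq_zero isPreconnected_univ (Set.mem_univ x₀)
    (Filter.eventuallyEq_of_mem (hU.mem_nhds hx₀) h)
  exact MvPolynomial.funext fun x => hzero (Set.mem_univ (WithLp.toLp 2 x))

section L2

variable {U : Set (EuclideanSpace ℝ ι)}

theorem memLp_eval_restrict (q : MvPolynomial ι ℝ) (hU : IsCompact U) :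
    MemLp (fun y : 𝔼 => eval y q) 2 (volume.restrict U) :=
  (memLp_two_iff_integrable_sq (continuous_eval_euclidean q).aestronglyMeasurable).2
    (((continuous_eval_euclidean q).pow 2).continuousOn.integrableOn_compact hU)

noncomputable def evalL2 (hU : IsCompact U) :
    MvPolynomial ι ℝ →ₗ[ℝ] Lp ℝ 2 (volume.restrict U) where
  toFun q := (memLp_eval_restrict q hU).toLp _
  map_add' p q := by
    simp only [map_add]
    exact MemLp.toLp_add _ _
  map_smul' c q := by
    rw [RingHom.id_apply, ← MemLp.toLp_const_smul]
    exact (MemLp.toLp_eq_toLp_iff _ _).2 (.of_forall fun y => smul_eval _ _ _)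

theorem norm_evalL2_sq (hU : IsCompact U) (q : MvPolynomial ι ℝ) :
    ‖evalL2 hU q‖ ^ 2 = ∫ y in U, eval y q ^ 2 := by
  rw [← real_inner_self_eq_norm_sq, MeasureTheory.L2.inner_def]
  refine integral_congr_ae ((memLp_eval_restrict q hU).coeFn_toLp.mono fun y hy => ?_)
  simp [evalL2, hy, sq]

theorem evalL2_injective (hU : IsCompact U) (hUint : (interior U).Nonempty) :
    Function.Injective (evalL2 hU) := by
  refine (injective_iff_map_eq_zero _).2 fun q hq => ?_
  have hae : (fun y : 𝔼 => eval y q) =ᵐ[volume.restrict (interior U)] 0 :=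
    ae_restrict_of_ae_restrict_of_subset interior_subset <|
      (memLp_eval_restrict q hU).coeFn_toLp.symm.trans ((Lp.eq_zero_iff_ae_eq_zero).1 hq)
  exact eq_zero_of_eval_eq_zero_on_isOpen isOpen_interior hUint fun x hx =>
    Measure.eqOn_open_of_ae_eq hae isOpen_interior (continuous_eval_euclidean q).continuousOn
      continuousOn_const hx

theorem exists_sq_eval_le_mul_setIntegral_sq (l : ℕ) {A : Set 𝔼} (hA : IsCompact A)
    (hU : IsCompact U) (hUint : (interior U).Nonempty) :
    ∃ K, ∀ p : MvPolynomial ι ℝ, p.totalDegree ≤ l →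
      ∀ x ∈ A, eval x p ^ 2 ≤ K * ∫ y in U, eval y p ^ 2 := by
  let V := restrictTotalDegree ι ℝ l
  obtain ⟨C, hC⟩ := exists_norm_le_mul_norm_of_injective (S := evalL2 hU ∘ₗ V.subtype)
    ((evalL2_injective hU hUint).comp Subtype.val_injective)
    (fun x : A => (aeval (x : 𝔼).ofLp).toLinearMap ∘ₗ V.subtype)
    fun p => hA.exists_bound_of_continuousOn (continuous_eval_euclidean p.1).continuousOn |>.imp
      fun M hM x => by simpa using hM x x.2
  refine ⟨C ^ 2, fun p hp x hx => ?_⟩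
  have hpx : |eval x p| ≤ C * ‖evalL2 hU p‖ := by
    simpa using hC ⟨x, hx⟩ ⟨p, (mem_restrictTotalDegree _ _ _).2 hp⟩
  calc eval x p ^ 2 = |eval x p| ^ 2 := (sq_abs _).symm
    _ ≤ (C * ‖evalL2 hU p‖) ^ 2 := pow_le_pow_left₀ (abs_nonneg _) hpx 2
    _ = C ^ 2 * ∫ y in U, eval y p ^ 2 := by rw [mul_pow, norm_evalL2_sq]

theorem exists_setIntegral_sq_le_mul_setIntegral_norm_gradient_sq (l : ℕ) {A : Set 𝔼}
    (hA : IsCompact A) (hAc : Convex ℝ A) (hU : IsCompact U) (hUint : (interior U).Nonempty) :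
    ∃ C, ∀ P : MvPolynomial ι ℝ, P.totalDegree ≤ l → ∀ u₀ ∈ A, eval u₀ P = 0 →
      ∫ u in A, eval u P ^ 2 ≤ C * ∫ u in U, ‖gradient (fun y : 𝔼 => eval y P) u‖ ^ 2 := by
  obtain ⟨K, hK⟩ := exists_sq_eval_le_mul_setIntegral_sq l hA hU hUint
  refine ⟨volume.real A * (diam A ^ 2 * K), fun P hP u₀ hu₀ hPu₀ => ?_⟩
  set I := ∫ u in U, ‖gradient (fun y : 𝔼 => eval y P) u‖ ^ 2
  have hgrad : ∀ x ∈ A, ‖gradient (fun y : 𝔼 => eval y P) x‖ ^ 2 ≤ K * I := by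
    intro x hx
    have hI : I = ∑ j, ∫ u in U, eval u (pderiv j P) ^ 2 := by
      simp_rw [I, norm_gradient_eval_sq]
      exact integral_finsetSum _ fun j _ =>
        ((continuous_eval_euclidean _).pow 2).continuousOn.integrableOn_compact hU
    rw [norm_gradient_eval_sq, hI, Finset.mul_sum]
    exact Finset.sum_le_sum fun j _ => hK _ ((totalDegree_pderiv_le P j).trans hP) x hx
  have hval : ∀ x ∈ A, eval x P ^ 2 ≤ diam A ^ 2 * (K * I) := by
    intro x hx
    have hKI : 0 ≤ K * I := (sq_nonneg _).trans (hgrad u₀ hu₀)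
    have hmvt := hAc.norm_image_sub_le_of_norm_hasFDerivWithin_le
      (fun y _ => (hasGradientAt_eval_euclidean P y).differentiableAt.hasGradientAt.hasFDerivAt
        |>.hasFDerivWithinAt)
      (fun y hy => by rw [LinearIsometryEquiv.norm_map]; exact Real.le_sqrt_of_sq_le (hgrad y hy))
      hu₀ hx
    rw [hPu₀, sub_zero, Real.norm_eq_abs] at hmvt
    calc eval x P ^ 2 = |eval x P| ^ 2 := (sq_abs _).symm
      _ ≤ (√(K * I) * diam A) ^ 2 := by
        gcongr
        exact hmvt.trans (by gcongr; exact dist_le_diam_of_mem hA.isBounded hx hu₀)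
      _ = diam A ^ 2 * (K * I) := by rw [mul_pow, Real.sq_sqrt hKI, mul_comm]
  calc ∫ u in A, eval u P ^ 2 ≤ ∫ u in A, diam A ^ 2 * (K * I) :=
        setIntegral_mono_on
          (((continuous_eval_euclidean P).pow 2).continuousOn.integrableOn_compact hA)
          (integrableOn_const hA.measure_lt_top.ne) hA.measurableSet hval
    _ = volume.real A * (diam A ^ 2 * K) * I := by rw [setIntegral_const, smul_eq_mul]; ring

end L2

section Rescaling

variable {P q : MvPolynomial ι ℝ} {z : EuclideanSpace ℝ ι} {h : ℝ}

theorem gradient_eval_of_eval_eq_eval_add_smul (hP : ∀ u : 𝔼, eval u P = eval (z + h • u) q)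
    (u : 𝔼) :
    gradient (fun y : 𝔼 => eval y P) u = h • gradient (fun y : 𝔼 => eval y q) (z + h • u) := by
  simp_rw [hP]
  exact ((hasGradientAt_eval_euclidean q _).differentiableAt.hasGradientAt.comp_add_smul h).gradient

theorem setIntegral_closedBall_eval_sq_of_eval_eq_eval_add_smul
    (hP : ∀ u : 𝔼, eval u P = eval (z + h • u) q) (hh : 0 < h) (r : ℝ) :
    ∫ u in closedBall (0 : 𝔼) r, eval u P ^ 2 =
      (h ^ finrank ℝ 𝔼)⁻¹ * ∫ x in closedBall z (h * r), eval x q ^ 2 := by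
  simp_rw [hP]
  exact (setIntegral_closedBall_comp_add_smul _ (fun x : 𝔼 => eval x q ^ 2) z hh r).trans
    (smul_eq_mul _ _)

theorem setIntegral_closedBall_norm_gradient_sq_of_eval_eq_eval_add_smul
    (hP : ∀ u : 𝔼, eval u P = eval (z + h • u) q) (hh : 0 < h) (r : ℝ) :
    ∫ u in closedBall (0 : 𝔼) r, ‖gradient (fun y : 𝔼 => eval y P) u‖ ^ 2 =
      h ^ 2 * (h ^ finrank ℝ 𝔼)⁻¹ *
        ∫ x in closedBall z (h * r), ‖gradient (fun y : 𝔼 => eval y q) x‖ ^ 2 := by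
  simp_rw [gradient_eval_of_eval_eq_eval_add_smul hP, norm_smul, mul_pow,
    Real.norm_of_nonneg hh.le]
  rw [integral_const_mul, setIntegral_closedBall_comp_add_smul _
    (fun x => ‖gradient (fun y : 𝔼 => eval y q) x‖ ^ 2) z hh, smul_eq_mul, mul_assoc]

end Rescaling

theorem exists_setIntegral_sq_le_of_closedBall_subset (l : ℕ) {ρ : ℝ} (hρ : 0 < ρ) :
    ∃ C > 0, ∀ (τ : Set 𝔼) (z : 𝔼) (h : ℝ), 0 ≤ h →
      closedBall z (ρ * h) ⊆ τ → τ ⊆ closedBall z h →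
      ∀ q : MvPolynomial ι ℝ, q.totalDegree ≤ l → (∃ x₀ ∈ τ, eval x₀ q = 0) →
        ∫ x in τ, eval x q ^ 2 ≤
          C * h ^ 2 * ∫ x in τ, ‖gradient (fun y : 𝔼 => eval y q) x‖ ^ 2 := by
  obtain ⟨C, hC⟩ := exists_setIntegral_sq_le_mul_setIntegral_norm_gradient_sq l
    (isCompact_closedBall (0 : 𝔼) 1) (convex_closedBall 0 1) (isCompact_closedBall (0 : 𝔼) ρ)
    (by rw [interior_closedBall _ hρ.ne']; exact nonempty_ball.2 hρ)
  refine ⟨max C 1, by positivity, ?_⟩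
  rintro τ z h hh hinner houter q hq ⟨x₀, hx₀, hqx₀⟩
  rcases hh.eq_or_lt with rfl | hpos
  · have hτ : ∀ x ∈ τ, eval x q ^ 2 = 0 := fun x hx => by
      rw [closedBall_zero] at houter
      rw [houter hx, ← houter hx₀, hqx₀, sq, mul_zero]
    simp [setIntegral_eq_zero_of_forall_eq_zero hτ]
  obtain ⟨P, hPdeg, hP⟩ := exists_eval_eq_eval_add_smul q z h
  have hu₀ : h⁻¹ • (x₀ - z) ∈ closedBall (0 : 𝔼) 1 := by
    rw [mem_closedBall_zero_iff, norm_smul, Real.norm_of_nonneg (inv_nonneg.2 hpos.le),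
      inv_mul_le_one₀ hpos, ← dist_eq_norm]
    exact houter hx₀
  have hPu₀ : eval (h⁻¹ • (x₀ - z)) P = 0 := by
    rw [hP, smul_smul, mul_inv_cancel₀ hpos.ne', one_smul, add_sub_cancel, hqx₀]
  have hunit := (hC P (hPdeg.trans hq) _ hu₀ hPu₀).trans <| mul_le_mul_of_nonneg_right
    (le_max_left C 1) (integral_nonneg fun _ => by positivity)
  rw [setIntegral_closedBall_eval_sq_of_eval_eq_eval_add_smul hP hpos,
    setIntegral_closedBall_norm_gradient_sq_of_eval_eq_eval_add_smul hP hpos, mul_one,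
    inv_mul_le_iff₀ (by positivity), mul_comm h ρ] at hunit
  calc ∫ x in τ, eval x q ^ 2 ≤ ∫ x in closedBall z h, eval x q ^ 2 :=
        setIntegral_mono_set
          (((continuous_eval_euclidean q).pow 2).continuousOn.integrableOn_compact
            (isCompact_closedBall z h))
          (.of_forall fun _ => sq_nonneg _) houter.eventuallyLE
    _ ≤ max C 1 * h ^ 2 *
          ∫ x in closedBall z (ρ * h), ‖gradient (fun y : 𝔼 => eval y q) x‖ ^ 2 := by
        refine hunit.trans_eq ?_
        field_simp
    _ ≤ max C 1 * h ^ 2 * ∫ x in τ, ‖gradient (fun y : 𝔼 => eval y q) x‖ ^ 2 :=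
        mul_le_mul_of_nonneg_left (setIntegral_mono_set
          (((continuous_gradient_eval q).norm.pow 2).continuousOn.integrableOn_compact
            (isCompact_closedBall z h) |>.mono_set houter)
          (.of_forall fun _ => sq_nonneg _) hinner.eventuallyLE) (by positivity)

end MvPolynomial

theorem poincare_simplex_vanishing_vertex_general
    (d l : ℕ) (ρ : ℝ) (hρ : ρ ∈ Set.Ioc (0 : ℝ) 1) :
    ∃ C : ℝ, 0 < C ∧
      ∀ (v : Fin (d + 1) → EuclideanSpace ℝ (Fin d)), AffineIndependent ℝ v →
        ∀ τ : Set (EuclideanSpace ℝ (Fin d)), τ = convexHull ℝ (Set.range v) →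
          (∃ z, closedBall z (ρ * diam τ) ⊆ τ) →
          ∀ q : MvPolynomial (Fin d) ℝ, q.totalDegree ≤ l →
            (∃ i, MvPolynomial.eval (v i) q = 0) →
            ∫ x in τ, (MvPolynomial.eval x q) ^ 2 ≤
              C ^ 2 * (diam τ) ^ 2 *
                ∫ x in τ,
                  ‖gradient (fun y : EuclideanSpace ℝ (Fin d) => MvPolynomial.eval y q) x‖ ^ 2 := by
  obtain ⟨C, hC, hpoincare⟩ := exists_setIntegral_sq_le_of_closedBall_subset (ι := Fin d) l hρ.1
  refine ⟨√C, Real.sqrt_pos.2 hC, ?_⟩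
  rintro v - τ rfl ⟨z, hz⟩ q hq ⟨i, hi⟩
  have hbdd := ((Set.finite_range v).isCompact_convexHull (𝕜 := ℝ)).isBounded
  have hzτ : z ∈ convexHull ℝ (Set.range v) := hz (mem_closedBall_self (by positivity [hρ.1.le]))
  rw [Real.sq_sqrt hC.le]
  exact hpoincare _ z _ diam_nonneg hz (fun x hx => dist_le_diam_of_mem hbdd hx hzτ) q hq
    ⟨v i, subset_convexHull ℝ _ ⟨i, rfl⟩, hi⟩

/-- **Poincaré inequality on a shape-regular simplex for polynomials vanishing at a vertex.**
For every dimension `d ≥ 1`, degree bound `l` and shape-regularity parameter `ρ ∈ (0,1]`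
there is `C > 0` such that for every `ρ`-shape-regular simplex `τ ⊆ ℝ^d` (the convex hull of
`d+1` affinely independent vertices, containing a closed ball of radius `ρ · diam τ`) and every
polynomial `q` of total degree `≤ l` vanishing at one of the vertices,
`∫_τ q² ≤ C² (diam τ)² ∫_τ ‖∇q‖²`. -/
theorem poincare_simplex_vanishing_vertex
    (d l : ℕ) (hd : 1 ≤ d) (ρ : ℝ) (hρ : ρ ∈ Set.Ioc (0 : ℝ) 1) :
    ∃ C : ℝ, 0 < C ∧
      ∀ (v : Fin (d + 1) → EuclideanSpace ℝ (Fin d)), AffineIndependent ℝ v →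
        ∀ τ : Set (EuclideanSpace ℝ (Fin d)), τ = convexHull ℝ (Set.range v) →
          (∃ z, closedBall z (ρ * diam τ) ⊆ τ) →
          ∀ q : MvPolynomial (Fin d) ℝ, q.totalDegree ≤ l →
            (∃ i, MvPolynomial.eval (v i) q = 0) →
            ∫ x in τ, (MvPolynomial.eval x q) ^ 2 ≤
              C ^ 2 * (diam τ) ^ 2 *
                ∫ x in τ,
                  ‖gradient (fun y : EuclideanSpace ℝ (Fin d) => MvPolynomial.eval y q) x‖ ^ 2 :=
  poincare_simplex_vanishing_vertex_general d l ρ hρ
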